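/- Let X be a Grothendieck category with a small set S = {O_α} of compact projective generators and a localizing subcategory Y, and let Z be a weakly closed subcategory of X corresponding to the filter system {F_α} in S. Then: (1) Z is Y-torsionfree generated if and only if for every α and every J ∈ F_α there exists I ∈ F_α with Ĩ ⊆ J; and (2) Z is Y-essentially stable if and only if whenever I ⊆ L ⊆ O_α with L/I ∈ Z and O_α/L ∈ Y, one has O_α/Ĩ ∈ Z. Here Ĩ denotes the Y-saturation of I inside O_α. -/

import Mathlib

open CategoryTheory CategoryTheory.Limits Opposite

universe v u

namespace Paper

variable {C : Type u} [Category.{v} C]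

/-- An object `M` is compact if `Hom(M, -)` commutes with arbitrary (small) direct sums. -/
def IsCompactObj (M : C) : Prop :=
  ∀ ι : Type v, Nonempty (PreservesColimitsOfShape (Discrete ι) (coyoneda.obj (op M)))

variable [Abelian C]

section
variable [HasColimits C]

/-- A full subcategory (given by its set of objects) is weakly closed if it is closed
under subobjects, quotient objects and arbitrary (small) direct sums. -/
structure IsWeaklyClosed (Z : Set C) : Prop where
  mem_of_mono : ∀ {A M : C} (f : A ⟶ M), Mono f → M ∈ Z → A ∈ Z
  mem_of_epi : ∀ {M B : C} (f : M ⟶ B), Epi f → M ∈ Z → B ∈ Z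
  sigma_mem : ∀ {ι : Type v} (f : ι → C), (∀ i, f i ∈ Z) → (∐ f) ∈ Z

/-- Closure under arbitrary (small) products. -/
def ClosedUnderProducts [HasLimits C] (Z : Set C) : Prop :=
  ∀ {ι : Type v} (f : ι → C), (∀ i, f i ∈ Z) → (∏ᶜ f) ∈ Z

/-- A closed subcategory: weakly closed and closed under products. -/
def IsClosedSub [HasLimits C] (Z : Set C) : Prop :=
  IsWeaklyClosed Z ∧ ClosedUnderProducts Z

/-- Closure under extensions. -/
def ClosedUnderExtensions (Y : Set C) : Prop :=
  ∀ S : ShortComplex C, S.ShortExact → S.X₁ ∈ Y → S.X₃ ∈ Y → S.X₂ ∈ Y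

/-- A localizing subcategory: weakly closed and closed under extensions. -/
def IsLocalizing (Y : Set C) : Prop :=
  IsWeaklyClosed Y ∧ ClosedUnderExtensions Y

/-- The full subcategory generated by a class of objects `G`: all quotient objects
of (small) direct sums of objects of `G`. -/
def generatedBy (G : Set C) : Set C :=
  { M | ∃ (ι : Type v) (f : ι → C), (∀ i, f i ∈ G) ∧ ∃ p : (∐ f) ⟶ M, Epi p }

end

/-- A filter of subobjects of an object: nonempty, upward closed, and closed under
finite intersections. -/
def IsFilterOn {O : C} (F : Set (Subobject O)) : Prop :=
  F.Nonempty ∧ (∀ {I J : Subobject O}, I ∈ F → I ≤ J → J ∈ F) ∧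
    ∀ {I J : Subobject O}, I ∈ F → J ∈ F → I ⊓ J ∈ F

/-- A principal filter consists of all subobjects containing a fixed one. -/
def IsPrincipalFilter {O : C} (F : Set (Subobject O)) : Prop :=
  ∃ I : Subobject O, F = { J | I ≤ J }

variable {A : Type v}

/-- A filter system in a family of objects. -/
def IsFilterSystem (O : A → C) (F : ∀ α, Set (Subobject (O α))) : Prop :=
  (∀ α, IsFilterOn (F α)) ∧
    ∀ (α β : A) (f : O α ⟶ O β), ∀ J ∈ F β, (Subobject.pullback f).obj J ∈ F α

/-- An ideal in a family of generators: a choice of subobject `I α ⊆ O α` for each `α`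
such that `f (I α) ⊆ I β` for every morphism `f : O α ⟶ O β`
(expressed as `I α ≤ f⁻¹ (I β)`). -/
def IsIdealIn (O : A → C) (I : ∀ α, Subobject (O α)) : Prop :=
  ∀ (α β : A) (f : O α ⟶ O β), I α ≤ (Subobject.pullback f).obj (I β)

/-- The quotient object `O/I` of `O` by a subobject `I`. -/
noncomputable def quotBy {O : C} (I : Subobject O) : C := cokernel I.arrow

/-- The weakly closed subcategory generated by the objects `O α / I`, `I ∈ F α`. -/
def wcOfFilterSystem [HasColimits C] (O : A → C) (F : ∀ α, Set (Subobject (O α))) : Set C :=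
  generatedBy { M | ∃ (α : A) (I : Subobject (O α)), I ∈ F α ∧ Nonempty (quotBy I ≅ M) }

/-- The filter system associated to a subcategory `Z`: `F α = {I | O α / I ∈ Z}`. -/
def filterOf (O : A → C) (Z : Set C) (α : A) : Set (Subobject (O α)) :=
  { I | quotBy I ∈ Z }

section QuotientCat

variable {D : Type u} [Category.{v} D]

/-- The image `π(Z)` of a subcategory, as a full subcategory of the target
(closed under isomorphism). -/
def imageSub (π : C ⥤ D) (Z : Set C) : Set D := { N | ∃ M ∈ Z, Nonempty (π.obj M ≅ N) }

/-- The preimage `π⁻¹(𝒵)` of a subcategory. -/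
def preimageSub (π : C ⥤ D) (Z : Set D) : Set C := { M | π.obj M ∈ Z }

/-- `M` is `Y`-torsionfree if it has no nonzero subobject belonging to `Y`. -/
def IsTorsionFree (Y : Set C) (M : C) : Prop :=
  ∀ (N : C) (f : N ⟶ M), Mono f → N ∈ Y → IsZero N

/-- `Z` is `Y`-essentially stable if `ωπ(M) ∈ Z` for all `M ∈ Z`. -/
def EssStable (π : C ⥤ D) (ω : D ⥤ C) (Z : Set C) : Prop :=
  ∀ M ∈ Z, ω.obj (π.obj M) ∈ Z

/-- `Z'`: the full subcategory generated by the `Y`-torsionfree objects of `Z`. -/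
def torsPart [HasColimits C] (Y Z : Set C) : Set C :=
  generatedBy { M | M ∈ Z ∧ IsTorsionFree Y M }

/-- `Z` is `Y`-torsionfree generated if every object of `Z` is a quotient of a direct sum
of `Y`-torsionfree objects of `Z`. -/
def TorsionfreeGenerated [HasColimits C] (Y Z : Set C) : Prop :=
  Z ⊆ torsPart Y Z

/-- `Z` is `Y`-weakly closed: weakly closed, `Y`-essentially stable
and `Y`-torsionfree generated. -/
def IsYWeaklyClosed [HasColimits C] (π : C ⥤ D) (ω : D ⥤ C) (Y Z : Set C) : Prop :=
  IsWeaklyClosed Z ∧ EssStable π ω Z ∧ TorsionfreeGenerated Y Z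

/-- `Z` is `Y`-closed: closed, `Y`-essentially stable and `Y`-torsionfree generated. -/
def IsYClosed [HasLimits C] [HasColimits C] (π : C ⥤ D) (ω : D ⥤ C) (Y Z : Set C) : Prop :=
  IsClosedSub Z ∧ EssStable π ω Z ∧ TorsionfreeGenerated Y Z

end QuotientCat

/-- The Gabriel product `Z * W`: all objects `P` fitting in a short exact sequence
`0 → M → P → N → 0` with `M ∈ W` and `N ∈ Z`. -/
def gabrielProd (Z W : Set C) : Set C :=
  { P | ∃ S : ShortComplex C, S.ShortExact ∧ S.X₁ ∈ W ∧ S.X₃ ∈ Z ∧ Nonempty (S.X₂ ≅ P) }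

/-- `Isat` is the `Y`-saturation of `I` inside `O`: the largest subobject `J ⊇ I`
with `J/I ∈ Y`; that is, `Isat/I = τ(O/I)`. -/
def IsSaturationOf (Y : Set C) {O : C} (I Isat : Subobject O) : Prop :=
  ∃ h : I ≤ Isat, cokernel (Subobject.ofLE I Isat h) ∈ Y ∧
    ∀ (J : Subobject O) (hJ : I ≤ J), cokernel (Subobject.ofLE I J hJ) ∈ Y → J ≤ Isat


/-- The subcategory generated by the objects `O α / I α` for an ideal `I`. -/
def wcOfIdeal [HasColimits C] (O : A → C) (I : ∀ α, Subobject (O α)) : Set C :=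
  generatedBy { M | ∃ α : A, Nonempty (quotBy (I α) ≅ M) }

/-- The union `Z₁ ∪ Z₂` of two weakly closed subcategories: explicitly, all
subquotients of objects `M ⊞ N` with `M ∈ Z₁` and `N ∈ Z₂`. -/
def unionWC (Z₁ Z₂ : Set C) : Set C :=
  { P | ∃ (M N Q : C) (i : Q ⟶ M ⊞ N) (p : Q ⟶ P), M ∈ Z₁ ∧ N ∈ Z₂ ∧ Mono i ∧ Epi p }


section Helpers

set_option linter.unusedSectionVars false

open CategoryTheory.Abelian CategoryTheory.Abelian.Pseudoelement
open scoped Pseudoelement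

variable {𝒞 : Type u} [Category.{v} 𝒞] [Abelian 𝒞]

lemma pseudo_zero_of_isZero {P : 𝒞} (h : IsZero P) (a : P) : a = 0 :=
  Quotient.inductionOn a fun x => (pseudoZero_iff x).2 (h.eq_zero_of_tgt _)

lemma pseudo_cokernel_exact {A B : 𝒞} (m : A ⟶ B) (b : B) (hb : (cokernel.π m) b = 0) :
    ∃ a, m a = b :=
  pseudo_exact_of_exact (ShortComplex.exact_cokernel m) b hb

lemma pseudo_kernel_exact {A B : 𝒞} (f : A ⟶ B) (a : A) (ha : f a = 0) :
    ∃ z, (kernel.ι f) z = a :=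
  pseudo_exact_of_exact (ShortComplex.exact_kernel f) a ha

lemma pseudo_kernelSubobject {A B : 𝒞} (f : A ⟶ B) (a : A) (ha : f a = 0) :
    ∃ z, (kernelSubobject f).arrow z = a := by
  obtain ⟨z, hz⟩ := pseudo_kernel_exact f a ha
  refine ⟨(kernelSubobjectIso f).inv z, ?_⟩
  have h : (kernelSubobjectIso f).inv ≫ (kernelSubobject f).arrow = kernel.ι f := by simp
  rw [← Pseudoelement.comp_apply, h, hz]


lemma mono_cokernelDesc {A B T : 𝒞} (f : A ⟶ B) (u : B ⟶ T) (w : f ≫ u = 0)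
    (hker : ∀ b : B, pseudoApply u b = 0 → ∃ a, pseudoApply f a = b) :
    Mono (cokernel.desc f u w) := by
  apply mono_of_zero_of_map_zero
  intro x hx
  obtain ⟨y, rfl⟩ := pseudo_surjective_of_epi (cokernel.π f) x
  rw [← Pseudoelement.comp_apply, cokernel.π_desc] at hx
  obtain ⟨z, hz⟩ := hker y hx
  rw [← hz, ← Pseudoelement.comp_apply, cokernel.condition]
  exact zero_apply _ _

lemma mono_cokernelDesc_kernel {A B : 𝒞} (f : A ⟶ B) :
    Mono (cokernel.desc (kernelSubobject f).arrow f (by simp)) :=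
  mono_cokernelDesc _ _ _ (fun b hb => pseudo_kernelSubobject f b hb)

lemma papply_comp_eq {P Q R : 𝒞} (f : P ⟶ Q) (g : Q ⟶ R) {h : P ⟶ R} (w : f ≫ g = h)
    (a : P) : pseudoApply g (pseudoApply f a) = pseudoApply h a :=
  w ▸ (Pseudoelement.comp_apply f g a).symm

noncomputable def kerQuotDesc {P Q : 𝒞} (f : P ⟶ Q) : cokernel (kernelSubobject f).arrow ⟶ Q :=
  cokernel.desc _ f (by simp)

lemma mono_kerQuotDesc {P Q : 𝒞} (f : P ⟶ Q) : Mono (kerQuotDesc f) :=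
  mono_cokernelDesc_kernel f

lemma π_kerQuotDesc {P Q : 𝒞} (f : P ⟶ Q) :
    cokernel.π (kernelSubobject f).arrow ≫ kerQuotDesc f = f := cokernel.π_desc _ _ _

lemma ses_cokernel {A B Ob : 𝒞} {f : A ⟶ B} {g : B ⟶ Ob} {h : A ⟶ Ob} (w : f ≫ g = h)
    [Mono g] :
    (ShortComplex.mk
      (cokernel.desc f (g ≫ cokernel.π h) (by rw [← Category.assoc, w, cokernel.condition]))
      (cokernel.desc h (cokernel.π g) (by rw [← w, Category.assoc, cokernel.condition, comp_zero]))
      (by rw [← cancel_epi (cokernel.π f)]; simp)).ShortExact := by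
  refine ShortComplex.ShortExact.mk ?_ (mono_f := ?_) (epi_g := ?_)
  · apply exact_of_pseudo_exact
    intro b hb
    dsimp only [ShortComplex.mk] at hb ⊢
    obtain ⟨y, rfl⟩ := pseudo_surjective_of_epi (cokernel.π h) b
    replace hb := (papply_comp_eq _ _ (cokernel.π_desc _ _ _) y).symm.trans hb
    obtain ⟨z, hz⟩ := pseudo_cokernel_exact g y hb
    refine ⟨pseudoApply (cokernel.π f) z, ?_⟩
    refine (papply_comp_eq _ _ (cokernel.π_desc _ _ _) z).trans ?_
    refine (Pseudoelement.comp_apply g (cokernel.π h) z).trans ?_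
    rw [hz]
  · apply mono_of_zero_of_map_zero
    intro x hx
    dsimp only [ShortComplex.mk] at hx ⊢
    obtain ⟨y, rfl⟩ := pseudo_surjective_of_epi (cokernel.π f) x
    replace hx := (papply_comp_eq _ _ (cokernel.π_desc _ _ _) y).symm.trans hx
    replace hx := (Pseudoelement.comp_apply g (cokernel.π h) y).symm.trans hx
    obtain ⟨z, hz⟩ := pseudo_cokernel_exact h _ hx
    rw [← w] at hz
    replace hz := (Pseudoelement.comp_apply f g z).symm.trans hz
    have hzy := pseudo_injective_of_mono g hz
    rw [← hzy]
    refine (papply_comp_eq f (cokernel.π f) (cokernel.condition f) z).trans (zero_apply _ _)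
  · exact epi_of_epi_fac (cokernel.π_desc h (cokernel.π g) _)

lemma isIso_kernelLift_cokernelπ {A B : 𝒞} (m : A ⟶ B) [Mono m] :
    IsIso (kernel.lift (cokernel.π m) m (cokernel.condition m)) := by
  set μ := kernel.lift (cokernel.π m) m (cokernel.condition m) with hμ
  have hμι : μ ≫ kernel.ι (cokernel.π m) = m := kernel.lift_ι _ _ _
  haveI : Mono μ := mono_of_mono_fac hμι
  haveI : Epi μ := by
    apply epi_of_pseudo_surjective
    intro x
    have h0 : pseudoApply (cokernel.π m) (pseudoApply (kernel.ι (cokernel.π m)) x) = 0 :=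
      (papply_comp_eq _ _ (kernel.condition (cokernel.π m)) x).trans (zero_apply _ _)
    obtain ⟨y, hy⟩ := pseudo_cokernel_exact m _ h0
    refine ⟨y, pseudo_injective_of_mono (kernel.ι (cokernel.π m)) ?_⟩
    exact (papply_comp_eq μ _ hμι y).trans hy
  exact isIso_of_mono_of_epi μ

lemma lift_of_comp_cokernelπ_zero {A B T : 𝒞} (m : A ⟶ B) [Mono m] (u : T ⟶ B)
    (hu : u ≫ cokernel.π m = 0) : ∃ v : T ⟶ A, v ≫ m = u := by
  set μ := kernel.lift (cokernel.π m) m (cokernel.condition m) with hμ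
  haveI := isIso_kernelLift_cokernelπ m
  have hμι : μ ≫ kernel.ι (cokernel.π m) = m := kernel.lift_ι _ _ _
  have hinv : inv μ ≫ m = kernel.ι (cokernel.π m) := by
    rw [IsIso.inv_comp_eq, hμι]
  exact ⟨kernel.lift _ u hu ≫ inv μ, by rw [Category.assoc, hinv, kernel.lift_ι]⟩

lemma le_of_comp_cokernelπ_zero {Ob : 𝒞} {I J : Subobject Ob}
    (hw : I.arrow ≫ cokernel.π J.arrow = 0) : I ≤ J := by
  obtain ⟨v, hv⟩ := lift_of_comp_cokernelπ_zero J.arrow I.arrow hw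
  exact Subobject.le_of_comm v hv

lemma kernel_iso_cokernel_ofLE {Ob T : 𝒞} (I : Subobject Ob) (g : cokernel I.arrow ⟶ T) :
    ∃ (h : I ≤ kernelSubobject (cokernel.π I.arrow ≫ g))
      (θ : cokernel (Subobject.ofLE _ _ h) ⟶ kernel g), IsIso θ := by
  have hcond : I.arrow ≫ cokernel.π I.arrow ≫ g = 0 := by
    rw [← Category.assoc, cokernel.condition, zero_comp]
  have h : I ≤ kernelSubobject (cokernel.π I.arrow ≫ g) :=
    Subobject.le_of_comm (factorThruKernelSubobject _ I.arrow hcond)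
      (factorThruKernelSubobject_comp_arrow _ _ _)
  set J := kernelSubobject (cokernel.π I.arrow ≫ g) with hJ
  have hJar : J.arrow ≫ cokernel.π I.arrow ≫ g = 0 := kernelSubobject_arrow_comp _
  have hlift0 : (J.arrow ≫ cokernel.π I.arrow) ≫ g = 0 := by rw [Category.assoc]; exact hJar
  set lft := kernel.lift g (J.arrow ≫ cokernel.π I.arrow) hlift0 with hlft
  have hlι : lft ≫ kernel.ι g = J.arrow ≫ cokernel.π I.arrow := kernel.lift_ι _ _ _
  have hzero : Subobject.ofLE I J h ≫ lft = 0 := by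
    rw [← cancel_mono (kernel.ι g), Category.assoc, hlι, ← Category.assoc,
      Subobject.ofLE_arrow, cokernel.condition, zero_comp]
  haveI hm : Mono (cokernel.desc _ lft hzero) := by
    apply mono_of_zero_of_map_zero
    intro x hx
    obtain ⟨y, rfl⟩ := pseudo_surjective_of_epi (cokernel.π (Subobject.ofLE I J h)) x
    replace hx := (papply_comp_eq _ _ (cokernel.π_desc _ lft hzero) y).symm.trans hx
    have hx2 : pseudoApply (kernel.ι g) (pseudoApply lft y) = 0 := by
      rw [hx]; exact apply_zero _
    replace hx2 := ((papply_comp_eq lft _ hlι y).symm.trans hx2)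
    replace hx2 := (Pseudoelement.comp_apply J.arrow (cokernel.π I.arrow) y).symm.trans hx2
    obtain ⟨z, hz⟩ := pseudo_cokernel_exact I.arrow _ hx2
    rw [← Subobject.ofLE_arrow h] at hz
    replace hz := (Pseudoelement.comp_apply (Subobject.ofLE I J h) J.arrow z).symm.trans hz
    have hzy := pseudo_injective_of_mono J.arrow hz
    rw [← hzy]
    exact (papply_comp_eq _ _ (cokernel.condition (Subobject.ofLE I J h)) z).trans
      (zero_apply _ _)
  haveI he : Epi (cokernel.desc _ lft hzero) := by
    apply epi_of_pseudo_surjective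
    intro x
    obtain ⟨y, hy⟩ := pseudo_surjective_of_epi (cokernel.π I.arrow)
      (pseudoApply (kernel.ι g) x)
    have h1 : pseudoApply (cokernel.π I.arrow ≫ g) y = 0 := by
      refine (Pseudoelement.comp_apply _ _ y).trans ?_
      rw [hy]
      exact (papply_comp_eq (kernel.ι g) g (kernel.condition g) x).trans (zero_apply _ _)
    obtain ⟨z, hz⟩ := pseudo_kernelSubobject (cokernel.π I.arrow ≫ g) y h1
    refine ⟨pseudoApply (cokernel.π (Subobject.ofLE I J h)) z,
      pseudo_injective_of_mono (kernel.ι g) ?_⟩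
    calc pseudoApply (kernel.ι g) (pseudoApply (cokernel.desc _ lft hzero)
          (pseudoApply (cokernel.π (Subobject.ofLE I J h)) z))
        = pseudoApply (kernel.ι g) (pseudoApply lft z) := by
          rw [papply_comp_eq _ _ (cokernel.π_desc _ lft hzero) z]
      _ = pseudoApply (J.arrow ≫ cokernel.π I.arrow) z := papply_comp_eq lft _ hlι z
      _ = pseudoApply (cokernel.π I.arrow) (pseudoApply J.arrow z) :=
          Pseudoelement.comp_apply _ _ z
      _ = pseudoApply (cokernel.π I.arrow) y := by rw [hz]
      _ = pseudoApply (kernel.ι g) x := hy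
  exact ⟨h, cokernel.desc _ lft hzero, isIso_of_mono_of_epi _⟩

lemma quot_isTorsionFree_iff {Y : Set 𝒞} {Ob : 𝒞} (I : Subobject Ob) :
    IsTorsionFree Y (quotBy I) ↔ IsTorsionFree Y (cokernel I.arrow) := Iff.rfl

lemma sat_eq_of_torsionFree {Y : Set 𝒞} {Ob : 𝒞} {I S : Subobject Ob}
    (hs : IsSaturationOf Y I S) (htf : IsTorsionFree Y (quotBy I)) : S = I := by
  obtain ⟨h1, hY1, -⟩ := hs
  have hses := ses_cokernel (Subobject.ofLE_arrow h1)
  haveI hmono := hses.mono_f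
  have hz : IsZero (cokernel (Subobject.ofLE I S h1)) := htf _ _ hmono hY1
  have hπ0 : cokernel.π (Subobject.ofLE I S h1) = 0 := hz.eq_zero_of_tgt _
  haveI hepi : Epi (Subobject.ofLE I S h1) := epi_of_cokernel_π_eq_zero _ hπ0
  haveI : IsIso (Subobject.ofLE I S h1) := isIso_of_mono_of_epi _
  refine le_antisymm ?_ h1
  exact Subobject.le_of_comm (inv (Subobject.ofLE I S h1))
    (by rw [IsIso.inv_comp_eq]; exact (Subobject.ofLE_arrow h1).symm)

omit [Abelian 𝒞] in
lemma torsionFree_of_mono [Preadditive 𝒞] {Y : Set 𝒞} {M N : 𝒞} (f : N ⟶ M) (hf : Mono f)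
    (h : IsTorsionFree Y M) : IsTorsionFree Y N := by
  intro T t ht hT
  haveI := ht; haveI := hf
  exact h T (t ≫ f) (mono_comp _ _) hT

lemma torsionFree_quot_sat [HasColimits 𝒞] {Y : Set 𝒞} (hYw : IsWeaklyClosed Y)
    (hYe : ClosedUnderExtensions Y) {Ob : 𝒞} {I S : Subobject Ob}
    (hs : IsSaturationOf Y I S) : IsTorsionFree Y (quotBy S) := by
  obtain ⟨h1, hY1, hmax⟩ := hs
  intro N m hm hN
  haveI := hm
  obtain ⟨h2, θ, hθ⟩ := kernel_iso_cokernel_ofLE S (cokernel.π m)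
  haveI := isIso_kernelLift_cokernelπ m
  set μ := kernel.lift (cokernel.π m) m (cokernel.condition m) with hμ
  -- cokernel (ofLE S J h2) ∈ Y since it is isomorphic to N ∈ Y
  have hmem : cokernel (Subobject.ofLE S _ h2) ∈ Y := by
    haveI := hθ
    refine hYw.mem_of_mono (θ ≫ inv (I := isIso_kernelLift_cokernelπ m) μ)
      (mono_comp' (IsIso.mono_of_iso θ)
        (@IsIso.mono_of_iso _ _ _ _ _ (@IsIso.inv_isIso _ _ _ _ μ (isIso_kernelLift_cokernelπ m)))) hN
  -- three-level extension
  have hses := ses_cokernel (Subobject.ofLE_comp_ofLE I S _ h1 h2)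
  have hX2 : cokernel (Subobject.ofLE I _ (h1.trans h2)) ∈ Y := hYe _ hses hY1 hmem
  have hle : _ ≤ S := hmax _ (h1.trans h2) hX2
  haveI : IsIso (Subobject.ofLE S _ h2) := by
    refine ⟨Subobject.ofLE _ S hle, ?_, ?_⟩
    · rw [Subobject.ofLE_comp_ofLE, Subobject.ofLE_refl]
    · rw [Subobject.ofLE_comp_ofLE, Subobject.ofLE_refl]
  have hzero : IsZero (cokernel (Subobject.ofLE S _ h2)) :=
    (isZero_zero 𝒞).of_iso (cokernel.ofEpi _)
  haveI := hθ
  haveI : Mono (μ ≫ inv (I := hθ) θ) :=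
    mono_comp' (@IsIso.mono_of_iso _ _ _ _ μ (isIso_kernelLift_cokernelπ m))
      (@IsIso.mono_of_iso _ _ _ _ _ (@IsIso.inv_isIso _ _ _ _ θ hθ))
  exact IsZero.of_mono_eq_zero (μ ≫ inv (I := hθ) θ) (hzero.eq_zero_of_tgt _)

section HelpersColim

variable [HasColimits 𝒞]

lemma IsWeaklyClosed.mem_of_iso {Z : Set 𝒞} (hZ : IsWeaklyClosed Z) {M N : 𝒞}
    (e : M ≅ N) (h : M ∈ Z) : N ∈ Z :=
  hZ.mem_of_mono e.symm.hom (by infer_instance) h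

lemma epi_canonical {A : Type v} {M : 𝒞} (O : A → 𝒞) (hsep : ObjectProperty.IsSeparating (fun G => G ∈ Set.range O)) :
    Epi (Sigma.desc (fun p : Σ α, (O α ⟶ M) => p.2) :
      (∐ fun p : Σ α, (O α ⟶ M) => O p.1) ⟶ M) := by
  constructor
  intro T u w huv
  apply hsep
  rintro G ⟨α, rfl⟩ hmor
  have h2 := Sigma.ι (fun p : Σ α, (O α ⟶ M) => O p.1) ⟨α, hmor⟩ ≫= huv
  simpa using h2

lemma mem_generatedBy_of_components {A : Type v} {M : 𝒞} (O : A → 𝒞)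
    (hsep : ObjectProperty.IsSeparating (fun G => G ∈ Set.range O)) {G : Set 𝒞}
    (g : (Σ α, (O α ⟶ M)) → 𝒞) (hg : ∀ p, g p ∈ G)
    (t : ∀ p, O p.1 ⟶ g p) (u : ∀ p, g p ⟶ M) (hfac : ∀ p, t p ≫ u p = p.2) :
    M ∈ generatedBy G := by
  refine ⟨_, g, hg, Limits.Sigma.desc u, ?_⟩
  have hcomm : Limits.Sigma.map t ≫ Limits.Sigma.desc u
      = Limits.Sigma.desc (fun p : Σ α, (O α ⟶ M) => p.2) := by
    ext p
    simp [hfac]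
  haveI := epi_canonical O hsep (M := M)
  exact epi_of_epi_fac hcomm

lemma IsWeaklyClosed.mem_of_generatedBy {Z G : Set 𝒞} (hZ : IsWeaklyClosed Z)
    (hG : G ⊆ Z) {M : 𝒞} (h : M ∈ generatedBy G) : M ∈ Z := by
  obtain ⟨ι, f, hf, p, hp⟩ := h
  exact hZ.mem_of_epi p hp (hZ.sigma_mem f fun i => hG (hf i))

lemma IsWeaklyClosed.mem_of_cyclic {A : Type v} (O : A → 𝒞)
    (hsep : ObjectProperty.IsSeparating (fun G => G ∈ Set.range O)) {Z : Set 𝒞} (hZ : IsWeaklyClosed Z) {M : 𝒞}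
    (h : ∀ (α : A) (f : O α ⟶ M), quotBy (kernelSubobject f) ∈ Z) : M ∈ Z := by
  refine hZ.mem_of_generatedBy (le_refl Z) (mem_generatedBy_of_components O hsep
    (fun p => quotBy (kernelSubobject p.2)) (fun p => h p.1 p.2)
    (fun p => cokernel.π _) (fun p => cokernel.desc _ p.2 (by simp))
    (fun p => cokernel.π_desc _ _ _))

lemma factor_of_compact {M : 𝒞} (hM : IsCompactObj M) {ι : Type v} (f : ι → 𝒞)
    (g : M ⟶ ∐ f) : ∃ (i : ι) (h : M ⟶ f i), h ≫ Sigma.ι f i = g := by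
  obtain ⟨P⟩ := hM ι
  haveI := P
  have hc := isColimitOfPreserves (coyoneda.obj (op M))
    (colimit.isColimit (Discrete.functor f))
  obtain ⟨j, y, hy⟩ := Types.jointly_surjective _ hc g
  obtain ⟨i⟩ := j
  exact ⟨i, y, hy⟩

end HelpersColim

section HelpersAdj

open CategoryTheory.Abelian CategoryTheory.Abelian.Pseudoelement
open scoped Pseudoelement

variable {D : Type u} [Category.{v} D] [Abelian D]
variable (π : 𝒞 ⥤ D) (ω : D ⥤ 𝒞) (adj : π ⊣ ω)

include adj

lemma torsionFree_omega {Y : Set 𝒞} (hker : ∀ M : 𝒞, M ∈ Y ↔ IsZero (π.obj M)) (X' : D) :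
    IsTorsionFree Y (ω.obj X') := by
  haveI : ω.IsRightAdjoint := ⟨π, ⟨adj⟩⟩
  intro T t ht hT
  have h0 : IsZero (π.obj T) := (hker T).1 hT
  have ht0 : t = 0 := by
    conv_lhs => rw [← (adj.homEquiv T X').apply_symm_apply t]
    rw [Adjunction.homEquiv_unit, h0.eq_zero_of_src ((adj.homEquiv T X').symm t),
      Functor.map_zero, comp_zero]
  haveI := ht
  exact IsZero.of_mono_eq_zero t ht0

lemma isIso_π_unit [ω.Full] [ω.Faithful] (M : 𝒞) :
    IsIso (π.map (adj.unit.app M)) := by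
  haveI : IsIso adj.counit := inferInstance
  have tri : π.map (adj.unit.app M) ≫ adj.counit.app (π.obj M) = 𝟙 _ :=
    adj.left_triangle_components M
  exact IsIso.of_isIso_fac_right tri

lemma kernel_unit_mem {Y : Set 𝒞} (hker : ∀ M : 𝒞, M ∈ Y ↔ IsZero (π.obj M))
    [PreservesFiniteLimits π] [ω.Full] [ω.Faithful] (M : 𝒞) :
    kernel (adj.unit.app M) ∈ Y := by
  haveI : π.IsLeftAdjoint := ⟨ω, ⟨adj⟩⟩
  haveI := isIso_π_unit π ω adj M
  have h : π.map (kernel.ι (adj.unit.app M)) = 0 := by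
    rw [← cancel_mono (π.map (adj.unit.app M)), ← Functor.map_comp, kernel.condition,
      Functor.map_zero, zero_comp]
  haveI : Mono (π.map (kernel.ι (adj.unit.app M))) :=
    preserves_mono_of_preservesLimit π _
  exact (hker _).2 (IsZero.of_mono_eq_zero _ h)

lemma cokernel_unit_mem {Y : Set 𝒞} (hker : ∀ M : 𝒞, M ∈ Y ↔ IsZero (π.obj M))
    [ω.Full] [ω.Faithful] (M : 𝒞) :
    cokernel (adj.unit.app M) ∈ Y := by
  haveI : π.IsLeftAdjoint := ⟨ω, ⟨adj⟩⟩
  haveI : PreservesColimitsOfSize.{0, 0} π := adj.leftAdjoint_preservesColimits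
  haveI := isIso_π_unit π ω adj M
  haveI : Epi (π.map (cokernel.π (adj.unit.app M))) :=
    preserves_epi_of_preservesColimit π _
  have h : π.map (cokernel.π (adj.unit.app M)) = 0 := by
    rw [← cancel_epi (π.map (adj.unit.app M)), ← Functor.map_comp, cokernel.condition,
      Functor.map_zero, comp_zero]
  exact (hker _).2 (IsZero.of_epi_eq_zero _ h)

lemma mono_unit_of_torsionFree {Y : Set 𝒞} (hker : ∀ M : 𝒞, M ∈ Y ↔ IsZero (π.obj M))
    [PreservesFiniteLimits π] [ω.Full] [ω.Faithful]
    {M : 𝒞} (htf : IsTorsionFree Y M) : Mono (adj.unit.app M) := by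
  have hk : IsZero (kernel (adj.unit.app M)) :=
    htf _ (kernel.ι _) inferInstance (kernel_unit_mem π ω adj hker M)
  apply mono_of_zero_of_map_zero
  intro a ha
  obtain ⟨z, hz⟩ := pseudo_kernel_exact (adj.unit.app M) a ha
  rw [← hz, pseudo_zero_of_isZero hk z, apply_zero]

end HelpersAdj

noncomputable def quotMap {Ob : 𝒞} {I S : Subobject Ob} (h : I ≤ S) :
    cokernel I.arrow ⟶ cokernel S.arrow :=
  cokernel.desc _ (cokernel.π S.arrow)
    (by rw [← Subobject.ofLE_arrow h, Category.assoc, cokernel.condition, comp_zero])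

lemma π_quotMap {Ob : 𝒞} {I S : Subobject Ob} (h : I ≤ S) :
    cokernel.π I.arrow ≫ quotMap h = cokernel.π S.arrow := cokernel.π_desc _ _ _

instance epi_quotMap {Ob : 𝒞} {I S : Subobject Ob} (h : I ≤ S) : Epi (quotMap h) :=
  epi_of_epi_fac (π_quotMap h)

noncomputable def quotInc {Ob : 𝒞} {I L : Subobject Ob} (h : I ≤ L) :
    cokernel (Subobject.ofLE I L h) ⟶ cokernel I.arrow :=
  cokernel.desc _ (L.arrow ≫ cokernel.π I.arrow)
    (by rw [← Category.assoc, Subobject.ofLE_arrow, cokernel.condition])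

lemma ses_sub {Ob : 𝒞} {I L : Subobject Ob} (h : I ≤ L) :
    (ShortComplex.mk (quotInc h) (quotMap h)
      (by rw [← cancel_epi (cokernel.π (Subobject.ofLE I L h))]
          simp [quotInc, quotMap])).ShortExact :=
  ses_cokernel (Subobject.ofLE_arrow h)

section IsoFG

variable {D : Type u} [Category.{v} D] [Abelian D]

lemma shortExact_iso_f {S : ShortComplex 𝒞} (hS : S.ShortExact) (F : 𝒞 ⥤ D)
    [F.PreservesZeroMorphisms] [PreservesFiniteLimits F] [PreservesFiniteColimits F]
    (h3 : IsZero (F.obj S.X₃)) : IsIso (F.map S.f) := by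
  have hm := hS.map_of_exact F
  haveI : Mono (F.map S.f) := hm.mono_f
  haveI : Epi (F.map S.f) := hm.exact.epi_f (h3.eq_zero_of_tgt _)
  exact isIso_of_mono_of_epi _

lemma shortExact_iso_g {S : ShortComplex 𝒞} (hS : S.ShortExact) (F : 𝒞 ⥤ D)
    [F.PreservesZeroMorphisms] [PreservesFiniteLimits F] [PreservesFiniteColimits F]
    (h1 : IsZero (F.obj S.X₁)) : IsIso (F.map S.g) := by
  have hm := hS.map_of_exact F
  haveI : Epi (F.map S.g) := hm.epi_g
  haveI : Mono (F.map S.g) := hm.exact.mono_g (h1.eq_zero_of_src _)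
  exact isIso_of_mono_of_epi _

end IsoFG

section CokOfLE

open CategoryTheory.Abelian CategoryTheory.Abelian.Pseudoelement
open scoped Pseudoelement

lemma cokernel_ofLE_mem [HasColimits 𝒞] {Z : Set 𝒞} (hZ : IsWeaklyClosed Z)
    {Ob N M' : 𝒞} {K L : Subobject Ob} (hKL : K ≤ L)
    (f : Ob ⟶ N) (m : M' ⟶ N) (hm : Mono m) (hM' : M' ∈ Z)
    (hKf : K.arrow ≫ f = 0)
    (hexact : ∀ y : Ob, pseudoApply f y = 0 → ∃ z : (K : 𝒞), pseudoApply K.arrow z = y)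
    (hLf : (L.arrow ≫ f) ≫ cokernel.π m = 0) :
    cokernel (Subobject.ofLE K L hKL) ∈ Z := by
  haveI := hm
  obtain ⟨w, hw⟩ := lift_of_comp_cokernelπ_zero m (L.arrow ≫ f) hLf
  have hθ0 : Subobject.ofLE K L hKL ≫ w = 0 := by
    rw [← cancel_mono m, Category.assoc, hw, zero_comp, ← Category.assoc,
      Subobject.ofLE_arrow, hKf]
  have hmonoθ : Mono (cokernel.desc _ w hθ0) := by
    apply mono_cokernelDesc
    intro b hb
    have hmb : pseudoApply m (pseudoApply w b) = 0 := by
      rw [hb]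
      exact apply_zero _
    replace hmb := (papply_comp_eq w m hw b).symm.trans hmb
    replace hmb := (Pseudoelement.comp_apply L.arrow f b).symm.trans hmb
    obtain ⟨z, hz⟩ := hexact _ hmb
    refine ⟨z, pseudo_injective_of_mono L.arrow ?_⟩
    exact (papply_comp_eq _ _ (Subobject.ofLE_arrow hKL) z).trans hz
  exact hZ.mem_of_mono _ hmonoθ hM'

end CokOfLE

end Helpers

open CategoryTheory.Abelian CategoryTheory.Abelian.Pseudoelement in
open scoped Pseudoelement in
/-- For a weakly closed `Z` corresponding to the filter system `{F α}`:
(1) `Z` is `Y`-torsionfree generated iff every `J ∈ F α` contains the `Y`-saturation of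
some `I ∈ F α`; (2) `Z` is `Y`-essentially stable iff for all `I ≤ L ≤ O α` with
`L/I ∈ Z` and `O α / L ∈ Y`, one has `O α / Ĩ ∈ Z`. -/
theorem statement_15 {X : Type u} [Category.{v} X] [Abelian X]
    [HasColimits X] [HasFilteredColimits X] [AB5 X]
    (A : Type v) (O : A → X) (hsep : ObjectProperty.IsSeparating (fun G => G ∈ Set.range O))
    (hcpt : ∀ α, IsCompactObj (O α)) (hproj : ∀ α, Projective (O α))
    {D : Type u} [Category.{v} D] [Abelian D] [HasColimits D]
    (Y : Set X) (hYloc : IsLocalizing Y)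
    (π : X ⥤ D) (ω : D ⥤ X) (adj : π ⊣ ω) [PreservesFiniteLimits π]
    [ω.Full] [ω.Faithful]
    (hker : ∀ M : X, M ∈ Y ↔ IsZero (π.obj M))
    (sat : ∀ (α : A) (I : Subobject (O α)), Subobject (O α))
    (hsat : ∀ (α : A) (I : Subobject (O α)), IsSaturationOf Y I (sat α I))
    (Z : Set X) (hZ : IsWeaklyClosed Z)
    (F : ∀ α, Set (Subobject (O α))) (hF : ∀ α, F α = filterOf O Z α) :
    (TorsionfreeGenerated Y Z ↔ ∀ α, ∀ J ∈ F α, ∃ I ∈ F α, sat α I ≤ J) ∧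
    (EssStable π ω Z ↔ ∀ (α : A) (I L : Subobject (O α)) (h : I ≤ L),
      cokernel (Subobject.ofLE I L h) ∈ Z → quotBy L ∈ Y → quotBy (sat α I) ∈ Z) := by
  classical
  obtain ⟨hYw, hYe⟩ := hYloc
  have hmemF : ∀ (α : A) (I : Subobject (O α)), I ∈ F α ↔ quotBy I ∈ Z := by
    intro α I
    rw [hF α]
    exact Iff.rfl
  have hquotker : ∀ {α : A} {N : X} (f : O α ⟶ N), N ∈ Z →
      quotBy (kernelSubobject f) ∈ Z := by
    intro α N f hN
    exact hZ.mem_of_mono (kerQuotDesc f) (mono_kerQuotDesc f) hN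
  haveI : π.IsLeftAdjoint := ⟨ω, ⟨adj⟩⟩
  haveI : PreservesColimitsOfSize.{0, 0} π := adj.leftAdjoint_preservesColimits
  constructor
  · constructor
    · -- torsionfree generated implies filter condition
      intro hTFG α J hJ
      rw [hmemF] at hJ
      obtain ⟨ι, g, hg, p, hp⟩ := hTFG hJ
      haveI : Epi (Y := cokernel J.arrow) p := hp
      haveI := hproj α
      have hℓp : Projective.factorThru (cokernel.π J.arrow) p ≫ p = cokernel.π J.arrow :=
        Projective.factorThru_comp _ _
      obtain ⟨i, hmor, hfac⟩ := factor_of_compact (hcpt α) g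
        (Projective.factorThru (cokernel.π J.arrow) p)
      have hQK : quotBy (kernelSubobject hmor) ∈ Z := hquotker hmor (hg i).1
      refine ⟨kernelSubobject hmor, (hmemF _ _).2 hQK, ?_⟩
      have htf : IsTorsionFree Y (quotBy (kernelSubobject hmor)) :=
        torsionFree_of_mono _ (mono_kerQuotDesc hmor) (hg i).2
      rw [sat_eq_of_torsionFree (hsat α _) htf]
      apply le_of_comp_cokernelπ_zero
      rw [← hℓp, ← hfac]
      change (kernelSubobject hmor).arrow ≫ (hmor ≫ Sigma.ι g i) ≫ p = 0
      simp only [← Category.assoc]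
      rw [kernelSubobject_arrow_comp, zero_comp, zero_comp]
    · -- filter condition implies torsionfree generated
      intro hcond M hMZ
      have hK : ∀ p : Σ α, (O α ⟶ M), kernelSubobject p.2 ∈ F p.1 := fun p =>
        (hmemF _ _).2 (hquotker p.2 hMZ)
      choose I hIF hle using fun p : Σ α, (O α ⟶ M) =>
        hcond p.1 (kernelSubobject p.2) (hK p)
      refine mem_generatedBy_of_components O hsep
        (fun p => quotBy (sat p.1 (I p))) (fun p => ?_)
        (fun p => cokernel.π _)
        (fun p => quotMap (hle p) ≫ kerQuotDesc p.2)
        (fun p => ?_)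
      · obtain ⟨h1, -, -⟩ := hsat p.1 (I p)
        refine ⟨?_, torsionFree_quot_sat hYw hYe (hsat p.1 (I p))⟩
        exact hZ.mem_of_epi (quotMap h1) (epi_quotMap h1) ((hmemF _ _).1 (hIF p))
      · change cokernel.π (sat p.1 (I p)).arrow ≫ (quotMap (hle p) ≫ kerQuotDesc p.2) = p.2
        rw [← Category.assoc, π_quotMap (hle p)]
        exact π_kerQuotDesc p.2
  · constructor
    · -- essentially stable implies saturation condition
      intro hE α I L h hLZ hLY
      have hT : ω.obj (π.obj (cokernel (Subobject.ofLE I L h))) ∈ Z := hE _ hLZ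
      obtain ⟨hsle, hsY, -⟩ := hsat α I
      haveI hiso1 : IsIso (π.map (quotInc h)) :=
        shortExact_iso_f (ses_sub h) π ((hker _).1 hLY)
      haveI hiso2 : IsIso (π.map (quotMap hsle)) :=
        shortExact_iso_g (ses_sub hsle) π ((hker _).1 hsY)
      have htfs : IsTorsionFree Y (quotBy (sat α I)) :=
        torsionFree_quot_sat hYw hYe (hsat α I)
      haveI hmu : Mono (adj.unit.app (quotBy (sat α I))) :=
        mono_unit_of_torsionFree π ω adj hker htfs
      refine hZ.mem_of_mono (adj.unit.app (quotBy (sat α I))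
        ≫ ω.map (inv (I := hiso2) (π.map (quotMap hsle)))
        ≫ ω.map (inv (π.map (quotInc h)))) ?_ hT
      haveI hm2 : Mono (ω.map (inv (I := hiso2) (π.map (quotMap hsle)))) := inferInstance
      haveI hm1 : Mono (ω.map (inv (π.map (quotInc h)))) := inferInstance
      exact mono_comp' hmu (mono_comp' hm2 hm1)
    · -- saturation condition implies essentially stable
      intro hcond M hMZ
      apply hZ.mem_of_cyclic O hsep
      intro α f
      have htfQ : IsTorsionFree Y (quotBy (kernelSubobject f)) :=
        torsionFree_of_mono _ (mono_kerQuotDesc f) (torsionFree_omega π ω adj hker _)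
      have hsatK : sat α (kernelSubobject f) = kernelSubobject f :=
        sat_eq_of_torsionFree (hsat α _) htfQ
      have hKL : kernelSubobject f ≤ kernelSubobject (f ≫ cokernel.π (adj.unit.app M)) :=
        Subobject.le_of_comm
          (factorThruKernelSubobject _ (kernelSubobject f).arrow
            (by rw [← Category.assoc, kernelSubobject_arrow_comp, zero_comp]))
          (factorThruKernelSubobject_comp_arrow _ _ _)
      have hLY : quotBy (kernelSubobject (f ≫ cokernel.π (adj.unit.app M))) ∈ Y :=
        hYw.mem_of_mono (kerQuotDesc (f ≫ cokernel.π (adj.unit.app M)))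
          (mono_kerQuotDesc _) (cokernel_unit_mem π ω adj hker M)
      have hM' : quotBy (kernelSubobject (adj.unit.app M)) ∈ Z :=
        hZ.mem_of_epi (cokernel.π _)
          (inferInstanceAs (Epi (cokernel.π (kernelSubobject (adj.unit.app M)).arrow))) hMZ
      have hd0 : adj.unit.app M ≫ cokernel.π (kerQuotDesc (adj.unit.app M)) = 0 := by
        calc adj.unit.app M ≫ cokernel.π (kerQuotDesc (adj.unit.app M))
            = (cokernel.π (kernelSubobject (adj.unit.app M)).arrow
                ≫ kerQuotDesc (adj.unit.app M))
              ≫ cokernel.π (kerQuotDesc (adj.unit.app M)) := by rw [π_kerQuotDesc]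
          _ = 0 := by rw [Category.assoc, cokernel.condition, comp_zero]
      have hLf : ((kernelSubobject (f ≫ cokernel.π (adj.unit.app M))).arrow ≫ f)
          ≫ cokernel.π (kerQuotDesc (adj.unit.app M)) = 0 := by
        rw [Category.assoc, ← cokernel.π_desc (adj.unit.app M)
          (cokernel.π (kerQuotDesc (adj.unit.app M))) hd0,
          ← Category.assoc f, ← Category.assoc, kernelSubobject_arrow_comp, zero_comp]
      have hLZ : cokernel (Subobject.ofLE _ _ hKL) ∈ Z :=
        cokernel_ofLE_mem hZ hKL f (kerQuotDesc (adj.unit.app M))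
          (mono_kerQuotDesc _) hM' (kernelSubobject_arrow_comp f)
          (fun y hy => pseudo_kernelSubobject f y hy) hLf
      have hfin := hcond α (kernelSubobject f)
        (kernelSubobject (f ≫ cokernel.π (adj.unit.app M))) hKL hLZ hLY
      rw [hsatK] at hfin
      exact hfin

end Paper
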